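/- Let n be a positive integer, d ∈ {1,…,2^n−1}, β > 0, g : {0,…,d·2^{n−1}−1} → [0,β], and let M be the (n,d)-matrix encoding of g. Let u ∈ ℝ^{2^n} be the uniform unit vector with all entries equal to 1/√(2^n), and let μ_g = (Σ_{k=0}^{d·2^{n−1}−1} g(k)) / (d·2^{n−1}) be the mean of g. Then uᵀ M u = (d/2)·μ_g; equivalently, μ_g = (2/d)·uᵀ M u. -/

import Mathlib

open Matrix

/-- The index function `ind(i,j) = 2^n * ((j - i) mod 2^n) + i` for `i, j ∈ {0,…,2^n−1}`,
where `(j - i) mod 2^n` is the representative in `{0,…,2^n−1}` of the integer `j - i`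
modulo `2^n`. -/
def ind (n : ℕ) (i j : Fin (2 ^ n)) : ℕ :=
  2 ^ n * (((j : ℤ) - (i : ℤ)) % (2 ^ n : ℤ)).toNat + (i : ℕ)

/-- The `(n,d)`-matrix encoding of a function `g` (given as `g : ℕ → ℝ`, only its values
on `{0,…,d·2^{n−1}−1}` are relevant): the `2^n × 2^n` real matrix `M` with
`M_{ii} = g(ind(i,i))` if `ind(i,i) < d·2^{n−1}` and `0` otherwise; and for `i ≠ j`,
`M_{ij} = g(ind(i,j))/2` if `ind(i,j) < d·2^{n−1}`, `M_{ij} = g(ind(j,i))/2` if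
`ind(j,i) < d·2^{n−1}`, and `0` otherwise. -/
noncomputable def matrixEncoding (n d : ℕ) (g : ℕ → ℝ) : Matrix (Fin (2 ^ n)) (Fin (2 ^ n)) ℝ :=
  fun i j =>
    if i = j then
      (if ind n i i < d * 2 ^ (n - 1) then g (ind n i i) else 0)
    else if ind n i j < d * 2 ^ (n - 1) then g (ind n i j) / 2
    else if ind n j i < d * 2 ^ (n - 1) then g (ind n j i) / 2
    else 0

lemma ind_mod (n : ℕ) (i j : Fin (2 ^ n)) : ind n i j % 2 ^ n = (i : ℕ) := by
  unfold ind
  rw [Nat.mul_add_mod]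
  exact Nat.mod_eq_of_lt i.2

lemma ind_div (n : ℕ) (i j : Fin (2 ^ n)) :
    ind n i j / 2 ^ n = (((j : ℤ) - (i : ℤ)) % (2 ^ n : ℤ)).toNat := by
  unfold ind
  rw [Nat.mul_add_div (by positivity), Nat.div_eq_of_lt i.2, add_zero]

lemma j_eq (n : ℕ) (i j : Fin (2 ^ n)) :
    ((i : ℤ) + ((j : ℤ) - (i : ℤ)) % (2 ^ n : ℤ)) % (2 ^ n : ℤ) = (j : ℤ) := by
  have hj : (j : ℤ) % (2 ^ n : ℤ) = (j : ℤ) :=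
    Int.emod_eq_of_lt (by positivity) (by exact_mod_cast j.2)
  conv_lhs => rw [Int.add_emod, Int.emod_emod_of_dvd _ dvd_rfl]
  rw [← Int.add_emod]
  simpa using hj

lemma ind_inj (n : ℕ) (i j i' j' : Fin (2 ^ n)) (h : ind n i j = ind n i' j') :
    i = i' ∧ j = j' := by
  have hi : (i : ℕ) = (i' : ℕ) := by
    rw [← ind_mod n i j, ← ind_mod n i' j', h]
  have hm : (((j : ℤ) - (i : ℤ)) % (2 ^ n : ℤ)).toNat
      = (((j' : ℤ) - (i' : ℤ)) % (2 ^ n : ℤ)).toNat := by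
    rw [← ind_div n i j, ← ind_div n i' j', h]
  have h2 : (0:ℤ) < 2 ^ n := by positivity
  have hmz : ((j : ℤ) - (i : ℤ)) % (2 ^ n : ℤ) = ((j' : ℤ) - (i' : ℤ)) % (2 ^ n : ℤ) := by
    have h0 := Int.emod_nonneg ((j : ℤ) - (i : ℤ)) (ne_of_gt h2)
    have h0' := Int.emod_nonneg ((j' : ℤ) - (i' : ℤ)) (ne_of_gt h2)
    omega
  have hiz : (i : ℤ) = (i' : ℤ) := by exact_mod_cast hi
  have hj : (j : ℤ) = (j' : ℤ) := by
    rw [← j_eq n i j, ← j_eq n i' j', hmz, hiz]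
  exact ⟨Fin.ext hi, Fin.ext (by exact_mod_cast hj)⟩

lemma ind_asym (n : ℕ) (hn : 0 < n) (d : ℕ) (hd : d < 2 ^ n) (i j : Fin (2 ^ n))
    (hij : i ≠ j) (h1 : ind n i j < d * 2 ^ (n - 1)) :
    ¬ ind n j i < d * 2 ^ (n - 1) := by
  intro h2
  have h2p : (0:ℤ) < 2 ^ n := by positivity
  set l := ((j : ℤ) - (i : ℤ)) % (2 ^ n : ℤ) with hl
  set o := ((i : ℤ) - (j : ℤ)) % (2 ^ n : ℤ) with ho
  have hln : 0 ≤ l := Int.emod_nonneg _ (ne_of_gt h2p)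
  have hon : 0 ≤ o := Int.emod_nonneg _ (ne_of_gt h2p)
  have hlt : l < 2 ^ n := Int.emod_lt_of_pos _ h2p
  have hot : o < 2 ^ n := Int.emod_lt_of_pos _ h2p
  have hlne : l ≠ 0 := by
    intro h
    have hji : (j : ℤ) = (i : ℤ) := by
      have hx := j_eq n i j
      rw [← hl, h, add_zero] at hx
      rw [← hx]
      exact Int.emod_eq_of_lt (by positivity) (by exact_mod_cast i.2)
    exact hij (Fin.ext (by exact_mod_cast hji.symm))
  have hdvd : (2 ^ n : ℤ) ∣ (l + o) := by
    apply Int.dvd_of_emod_eq_zero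
    rw [hl, ho, ← Int.add_emod]
    simp
  obtain ⟨c, hc⟩ := hdvd
  have hlpos : 0 < l := lt_of_le_of_ne hln (Ne.symm hlne)
  have hc0 : 0 < c := by
    by_contra hcc
    push_neg at hcc
    have := mul_nonpos_of_nonneg_of_nonpos h2p.le hcc
    linarith
  have hc2 : c < 2 := by
    by_contra hcc
    push_neg at hcc
    have := mul_le_mul_of_nonneg_left hcc h2p.le
    linarith
  have hc1 : c = 1 := by omega
  rw [hc1, mul_one] at hc
  set m := l.toNat with hm
  set m' := o.toNat with hm'
  have hcast : ((2 ^ n : ℕ) : ℤ) = 2 ^ n := by push_cast; ring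
  have hmmn : m + m' = 2 ^ n := by omega
  have hb1 : 2 ^ n * m < d * 2 ^ (n - 1) := by
    unfold ind at h1
    exact lt_of_le_of_lt (Nat.le_add_right _ _) h1
  have hb2 : 2 ^ n * m' < d * 2 ^ (n - 1) := by
    unfold ind at h2
    exact lt_of_le_of_lt (Nat.le_add_right _ _) h2
  have hpow : 2 ^ n = 2 * 2 ^ (n - 1) := by
    rw [← pow_succ']
    congr 1
    omega
  rw [hpow] at hb1 hb2 hmmn
  have hd' : d < 2 * 2 ^ (n - 1) := by rw [← hpow]; exact hd
  have hp : 0 < 2 ^ (n - 1) := by positivity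
  have hm1 : 2 * m < d :=
    Nat.lt_of_mul_lt_mul_right (show (2*m) * 2^(n-1) < d * 2^(n-1) from by nlinarith)
  have hm2 : 2 * m' < d :=
    Nat.lt_of_mul_lt_mul_right (show (2*m') * 2^(n-1) < d * 2^(n-1) from by nlinarith)
  omega

lemma int_aux (N a q : ℤ) (h0 : 0 ≤ q) (hq : q < N) :
    ((a + q) % N - a) % N = q := by
  rw [Int.sub_emod, Int.emod_emod_of_dvd _ dvd_rfl, ← Int.sub_emod]
  simp only [add_sub_cancel_left]
  exact Int.emod_eq_of_lt h0 hq

lemma ind_spec (n k : ℕ) (hk : k < 2 ^ n * 2 ^ n) :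
    ind n ⟨k % 2 ^ n, Nat.mod_lt _ (by positivity)⟩
      ⟨(k % 2 ^ n + k / 2 ^ n) % 2 ^ n, Nat.mod_lt _ (by positivity)⟩ = k := by
  have hq : k / 2 ^ n < 2 ^ n := Nat.div_lt_of_lt_mul hk
  unfold ind
  have h1' : (((k % 2 ^ n + k / 2 ^ n) % 2 ^ n : ℕ) : ℤ)
      = (((k % 2 ^ n : ℕ) : ℤ) + ((k / 2 ^ n : ℕ) : ℤ)) % ((2 : ℤ) ^ n) := by
    push_cast
    ring_nf
  show 2 ^ n * (((((k % 2 ^ n + k / 2 ^ n) % 2 ^ n : ℕ) : ℤ) - ((k % 2 ^ n : ℕ) : ℤ))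
      % ((2 : ℤ) ^ n)).toNat + (k % 2 ^ n) = k
  rw [h1', int_aux _ _ _ (by positivity) (by exact_mod_cast hq), Int.toNat_natCast]
  exact Nat.div_add_mod k (2 ^ n)

/-- Sum of the indicator-weighted `g` over all pairs equals the sum of `g` over the range. -/
lemma sum_indicator_eq (n : ℕ) (d : ℕ) (hd : d < 2 ^ n) (g : ℕ → ℝ) :
    ∑ p : Fin (2 ^ n) × Fin (2 ^ n),
        (if ind n p.1 p.2 < d * 2 ^ (n - 1) then g (ind n p.1 p.2) else 0)
      = ∑ k ∈ Finset.range (d * 2 ^ (n - 1)), g k := by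
  have hT : d * 2 ^ (n - 1) ≤ 2 ^ n * 2 ^ n := by
    apply Nat.mul_le_mul hd.le
    exact Nat.pow_le_pow_right (by norm_num) (Nat.sub_le _ _)
  rw [← Finset.sum_filter]
  refine Finset.sum_nbij' (i := fun p => ind n p.1 p.2)
    (j := fun k => (⟨k % 2 ^ n, Nat.mod_lt _ (by positivity)⟩,
      ⟨(k % 2 ^ n + k / 2 ^ n) % 2 ^ n, Nat.mod_lt _ (by positivity)⟩)) ?_ ?_ ?_ ?_ ?_
  · intro p hp
    simp only [Finset.mem_filter] at hp
    exact Finset.mem_range.mpr hp.2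
  · intro k hk
    have hk' : k < d * 2 ^ (n - 1) := Finset.mem_range.mp hk
    simp only [Finset.mem_filter, Finset.mem_univ, true_and]
    rw [ind_spec n k (lt_of_lt_of_le hk' hT)]
    exact hk'
  · intro p hp
    simp only [Finset.mem_filter] at hp
    have hs := ind_spec n (ind n p.1 p.2) (lt_of_lt_of_le hp.2 hT)
    obtain ⟨h1, h2⟩ := ind_inj n _ _ _ _ hs
    exact Prod.ext h1 h2
  · intro k hk
    exact ind_spec n k (lt_of_lt_of_le (Finset.mem_range.mp hk) hT)
  · intro p hp
    rfl

lemma pair_eq (n : ℕ) (hn : 0 < n) (d : ℕ) (hd : d < 2 ^ n) (g : ℕ → ℝ)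
    (i j : Fin (2 ^ n)) :
    matrixEncoding n d g i j + matrixEncoding n d g j i
      = (if ind n i j < d * 2 ^ (n - 1) then g (ind n i j) else 0)
        + (if ind n j i < d * 2 ^ (n - 1) then g (ind n j i) else 0) := by
  unfold matrixEncoding
  by_cases hij : i = j
  · subst hij
    simp
  · simp only [hij, Ne.symm hij, if_neg, if_false]
    by_cases h1 : ind n i j < d * 2 ^ (n - 1)
    · have h2 : ¬ ind n j i < d * 2 ^ (n - 1) := ind_asym n hn d hd i j hij h1
      simp [h1, h2]
    · by_cases h2 : ind n j i < d * 2 ^ (n - 1)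
      · simp [h1, h2]
      · simp [h1, h2]

/-- Let `M` be the `(n,d)`-matrix encoding of `g : {0,…,d·2^{n−1}−1} → [0,β]` with
`d ∈ {1,…,2^n−1}`, let `u` be the uniform unit vector with all entries `1/√(2^n)`,
and let `μ_g` be the mean of `g`. Then `uᵀ M u = (d/2)·μ_g`. -/
theorem matrixEncoding_expectation (n : ℕ) (hn : 0 < n) (d : ℕ) (hd1 : 1 ≤ d)
    (hd : d < 2 ^ n) (β : ℝ) (hβ : 0 < β) (g : ℕ → ℝ)
    (hg : ∀ k < d * 2 ^ (n - 1), g k ∈ Set.Icc (0 : ℝ) β)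
    (u : Fin (2 ^ n) → ℝ) (hu : u = fun _ => 1 / Real.sqrt (2 ^ n))
    (μ : ℝ) (hμ : μ = (∑ k ∈ Finset.range (d * 2 ^ (n - 1)), g k) / (d * 2 ^ (n - 1))) :
    u ⬝ᵥ (matrixEncoding n d g).mulVec u = (d / 2 : ℝ) * μ := by
  set M := matrixEncoding n d g with hM
  set G := ∑ k ∈ Finset.range (d * 2 ^ (n - 1)), g k with hG
  -- the double sum of M equals G
  have hsum : ∑ i : Fin (2 ^ n), ∑ j : Fin (2 ^ n), M i j = G := by
    have h2 : (2 : ℝ) * (∑ i : Fin (2 ^ n), ∑ j : Fin (2 ^ n), M i j) = 2 * G := by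
      have hswap : ∑ i : Fin (2 ^ n), ∑ j : Fin (2 ^ n), M i j
          = ∑ i : Fin (2 ^ n), ∑ j : Fin (2 ^ n), M j i := Finset.sum_comm
      calc 2 * (∑ i : Fin (2 ^ n), ∑ j : Fin (2 ^ n), M i j)
          = ∑ i : Fin (2 ^ n), ∑ j : Fin (2 ^ n), (M i j + M j i) := by
            rw [two_mul]
            nth_rewrite 2 [hswap]
            rw [← Finset.sum_add_distrib]
            congr 1
            ext i
            rw [← Finset.sum_add_distrib]
        _ = ∑ i : Fin (2 ^ n), ∑ j : Fin (2 ^ n),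
              ((if ind n i j < d * 2 ^ (n - 1) then g (ind n i j) else 0)
                + (if ind n j i < d * 2 ^ (n - 1) then g (ind n j i) else 0)) := by
            apply Finset.sum_congr rfl
            intro i _
            apply Finset.sum_congr rfl
            intro j _
            exact pair_eq n hn d hd g i j
        _ = 2 * G := by
            rw [two_mul]
            have hs1 : ∑ i : Fin (2 ^ n), ∑ j : Fin (2 ^ n),
                (if ind n i j < d * 2 ^ (n - 1) then g (ind n i j) else 0) = G := by
              rw [hG, ← sum_indicator_eq n d hd g, ← Finset.sum_product']
              rfl
            have hs2 : ∑ i : Fin (2 ^ n), ∑ j : Fin (2 ^ n),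
                (if ind n j i < d * 2 ^ (n - 1) then g (ind n j i) else 0) = G := by
              rw [Finset.sum_comm]
              rw [hG, ← sum_indicator_eq n d hd g, ← Finset.sum_product']
              rfl
            calc ∑ i : Fin (2 ^ n), ∑ j : Fin (2 ^ n),
                  ((if ind n i j < d * 2 ^ (n - 1) then g (ind n i j) else 0)
                    + (if ind n j i < d * 2 ^ (n - 1) then g (ind n j i) else 0))
                = (∑ i : Fin (2 ^ n), ∑ j : Fin (2 ^ n),
                    (if ind n i j < d * 2 ^ (n - 1) then g (ind n i j) else 0))
                  + ∑ i : Fin (2 ^ n), ∑ j : Fin (2 ^ n),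
                    (if ind n j i < d * 2 ^ (n - 1) then g (ind n j i) else 0) := by
                  rw [← Finset.sum_add_distrib]
                  congr 1
                  ext i
                  rw [← Finset.sum_add_distrib]
              _ = G + G := by rw [hs1, hs2]
    linarith
  -- compute the quadratic form
  have hsq : (1 / Real.sqrt (2 ^ n)) * (1 / Real.sqrt (2 ^ n)) = 1 / 2 ^ n := by
    rw [div_mul_div_comm, one_mul, Real.mul_self_sqrt (by positivity)]
  have hquad : u ⬝ᵥ M.mulVec u = (1 / 2 ^ n) * G := by
    rw [hu]
    simp only [dotProduct, mulVec]
    calc ∑ i, (1 / Real.sqrt (2 ^ n)) * ∑ j, M i j * (1 / Real.sqrt (2 ^ n))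
        = ∑ i, ∑ j, (1 / Real.sqrt (2 ^ n)) * (1 / Real.sqrt (2 ^ n)) * M i j := by
          apply Finset.sum_congr rfl
          intro i _
          rw [Finset.mul_sum]
          apply Finset.sum_congr rfl
          intro j _
          ring
      _ = (1 / 2 ^ n) * ∑ i, ∑ j, M i j := by
          rw [Finset.mul_sum]
          apply Finset.sum_congr rfl
          intro i _
          rw [Finset.mul_sum]
          apply Finset.sum_congr rfl
          intro j _
          rw [hsq]
      _ = (1 / 2 ^ n) * G := by rw [hsum]
  rw [hquad, hμ]
  have hpowR : (2 : ℝ) ^ n = 2 * 2 ^ (n - 1) := by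
    rw [← pow_succ']
    congr 1
    omega
  have hdpos : (0 : ℝ) < d := by exact_mod_cast hd1
  have hppos : (0 : ℝ) < 2 ^ (n - 1) := by positivity
  rw [hpowR]
  push_cast
  field_simp
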